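/- Define d^{(k)}_{i,j} for integers i,j ≥ 0 by the recurrence d^{(k+1)}_{i,j} = d^{(k)}_{i,j−1} + q^j d^{(k)}_{i−1,j} + y(1−q^{j+1}) d^{(k)}_{i,j+1}, with d^{(0)}_{i,j} = 1 if (i,j)=(0,0) and 0 otherwise (terms with negative indices are 0). Then d^{(k)}_{i,j} = qbinom(i+j, i) · M_{(k−i−j)/2, k} when k−i−j is even and nonnegative, and d^{(k)}_{i,j} = 0 otherwise, where M_{ℓ,k} = y^ℓ ∑_{u=0}^{ℓ} (−1)^u q^{C(u+1,2)} qbinom(k−2ℓ+u, u) (C(k, ℓ−u) − C(k, ℓ−u−1)). -/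

import Mathlib

/-- Binomial coefficient with integer lower index, zero when the lower index is negative. -/
def intChoose (a : ℕ) (b : ℤ) : ℕ := if 0 ≤ b then a.choose b.toNat else 0

/-- The Gaussian q-binomial coefficient at `q`, via the q-Pascal recurrence. -/
def qbin {R : Type*} [CommRing R] (q : R) : ℕ → ℕ → R
  | _, 0 => 1
  | 0, _ + 1 => 0
  | n + 1, k + 1 => qbin q n k + q ^ (k + 1) * qbin q n (k + 1)

/-- The polynomial ring `ℚ[q,y]`. -/
abbrev QY : Type := MvPolynomial (Fin 2) ℚ

/-- The variable `q`. -/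
noncomputable def qv : QY := MvPolynomial.X 0
/-- The variable `y`. -/
noncomputable def yv : QY := MvPolynomial.X 1

/-- `M_{ℓ,k} = y^ℓ ∑_{u=0}^{ℓ} (−1)^u q^{C(u+1,2)} qbinom(k−2ℓ+u,u) (C(k,ℓ−u) − C(k,ℓ−u−1))`. -/
noncomputable def Mlk (ℓ k : ℕ) : QY :=
  yv ^ ℓ * ∑ u ∈ Finset.range (ℓ + 1),
    (-1 : QY) ^ u * qv ^ ((u + 1).choose 2) * qbin qv (k - 2 * ℓ + u) u *
      ((k.choose (ℓ - u) : QY) - (intChoose k ((ℓ : ℤ) - u - 1) : QY))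

/-- The normal-form coefficients `d^{(k)}_{i,j}`, defined by
`d^{(k+1)}_{i,j} = d^{(k)}_{i,j−1} + q^j d^{(k)}_{i−1,j} + y(1−q^{j+1}) d^{(k)}_{i,j+1}`
with terms with negative indices equal to `0`, and `d^{(0)}_{i,j} = δ_{(i,j),(0,0)}`. -/
noncomputable def dCoeff : ℕ → ℕ → ℕ → QY
  | 0, i, j => if i = 0 ∧ j = 0 then 1 else 0
  | k + 1, i, j =>
      (if j = 0 then 0 else dCoeff k i (j - 1)) +
      (if i = 0 then 0 else qv ^ j * dCoeff k (i - 1) j) +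
      yv * (1 - qv ^ (j + 1)) * dCoeff k i (j + 1)

/-!
The formula is checked against the defining recurrence of `dCoeff`. Write
`S n = ∑ᵤ (-1)ᵘ q^C(u+1,2) qbin(n+u-1, u) Xᵘ` and `B k = (1 - X)(1 + X)ᵏ`; then
`M_{ℓ,k} = yˡ [Xˡ] (S (k-2ℓ+1) · B k)`. Since `B (k+1) = (1 + X) B k` and
`(1 + X) S (n+1) = S n + (1 - q^(n+1)) X S (n+2)`, the `M_{ℓ,k}` satisfy a three-term recurrence
in `k`, which together with the q-Pascal rule and
`(1 - q^(j+1)) qbin(i+j+1, i) = (1 - q^(i+j+1)) qbin(i+j, i)` is exactly the recurrence of `dCoeff`.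
-/

section QBinomial

variable {R : Type*} [CommRing R] (q : R)

@[simp]
lemma qbin_zero_right (n : ℕ) : qbin q n 0 = 1 := by
  cases n <;> rfl

lemma qbin_succ_succ (n k : ℕ) :
    qbin q (n + 1) (k + 1) = qbin q n k + q ^ (k + 1) * qbin q n (k + 1) := rfl

lemma qbin_eq_zero_of_lt {n k : ℕ} (h : n < k) : qbin q n k = 0 := by
  induction n generalizing k with
  | zero => obtain ⟨k, rfl⟩ := Nat.exists_eq_add_of_lt h; rfl
  | succ n ih =>
    obtain ⟨k, rfl⟩ : ∃ k', k = k' + 1 := Nat.exists_eq_succ_of_ne_zero (by omega)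
    rw [qbin_succ_succ, ih (by omega), ih (by omega), mul_zero, add_zero]

@[simp]
lemma qbin_self (n : ℕ) : qbin q n n = 1 := by
  induction n with
  | zero => rfl
  | succ n ih =>
    rw [qbin_succ_succ, ih, qbin_eq_zero_of_lt q (Nat.lt_succ_self n), mul_zero, add_zero]

lemma one_sub_pow_mul_qbin_succ_right (k d : ℕ) :
    (1 - q ^ (k + 1)) * qbin q (k + d) (k + 1) = (1 - q ^ d) * qbin q (k + d) k := by
  induction hn : k + d generalizing k d with
  | zero =>
    obtain ⟨rfl, rfl⟩ : k = 0 ∧ d = 0 := by omega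
    simp [qbin_eq_zero_of_lt q zero_lt_one]
  | succ n ih =>
    rcases k with _ | k
    · obtain rfl : d = n + 1 := by omega
      have h := ih 0 n (by omega)
      simp only [zero_add, qbin_zero_right] at h ⊢
      rw [qbin_succ_succ, qbin_zero_right]
      linear_combination q * h
    rcases d with _ | d
    · simp [← hn, qbin_eq_zero_of_lt q (Nat.lt_succ_self (k + 1))]
    have h₁ := ih k (d + 1) (by omega)
    have h₂ := ih (k + 1) d (by omega)
    rw [qbin_succ_succ, qbin_succ_succ]
    linear_combination h₁ + q ^ (k + 2) * h₂

lemma one_sub_pow_mul_qbin_succ_left (k d : ℕ) :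
    (1 - q ^ (d + 1)) * qbin q (k + d + 1) k = (1 - q ^ (k + d + 1)) * qbin q (k + d) k := by
  rcases k with _ | k
  · simp
  have h := one_sub_pow_mul_qbin_succ_right q k (d + 1)
  rw [show k + 1 + d + 1 = k + (d + 1) + 1 by omega, qbin_succ_succ,
    show k + 1 + d = k + (d + 1) by omega]
  linear_combination -h

lemma qbin_succ_succ' (k d : ℕ) :
    qbin q (k + d + 1) (k + 1) = qbin q (k + d) (k + 1) + q ^ d * qbin q (k + d) k := by
  rw [qbin_succ_succ]
  linear_combination -one_sub_pow_mul_qbin_succ_right q k d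

lemma qbin_pascal_of_pos {i j : ℕ} (h : 0 < i + j) :
    (if j = 0 then 0 else qbin q (i + j - 1) i) +
      (if i = 0 then 0 else q ^ j * qbin q (i + j - 1) (i - 1)) = qbin q (i + j) i := by
  rcases i with _ | i <;> rcases j with _ | j
  · omega
  · simp
  · simp
  · simp only [Nat.add_one_ne_zero, if_false, Nat.add_sub_cancel]
    rw [show i + 1 + (j + 1) - 1 = i + j + 1 by omega,
      show i + 1 + (j + 1) = i + (j + 1) + 1 by omega,
      qbin_succ_succ' q i (j + 1)]
    ring_nf

end QBinomial

section Series

open PowerSeries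

variable {R : Type*} [CommRing R] (q : R)

/-- The index is shifted by one so that the series for `n = 0` is `1`
(`qbin (u - 1) u = 0` for `u > 0`). -/
noncomputable def signedQbinSeries (n : ℕ) : R⟦X⟧ :=
  mk fun u => (-1) ^ u * q ^ ((u + 1).choose 2) * qbin q (n + u - 1) u

lemma signedQbinSeries_zero : signedQbinSeries q 0 = 1 := by
  ext (_ | u)
  · simp [signedQbinSeries]
  · simp [signedQbinSeries, coeff_one, qbin_eq_zero_of_lt q (Nat.lt_succ_self u)]

lemma one_add_X_mul_signedQbinSeries (n : ℕ) :
    (1 + X) * signedQbinSeries q (n + 1) =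
      signedQbinSeries q n + C (1 - q ^ (n + 1)) * X * signedQbinSeries q (n + 2) := by
  ext (_ | u)
  · simp [signedQbinSeries, add_mul]
  have hsign : (-1 : R) ^ (u + 1) * q ^ ((u + 1 + 1).choose 2) =
      -q ^ (u + 1) * ((-1) ^ u * q ^ ((u + 1).choose 2)) := by
    rw [Nat.choose_succ_succ (u + 1) 1, Nat.choose_one_right, pow_add, pow_succ]
    ring
  have hpascal := qbin_succ_succ' q u n
  have habsorb := one_sub_pow_mul_qbin_succ_left q u n
  simp only [signedQbinSeries, add_mul, one_mul, map_add, coeff_mk, coeff_succ_X_mul, mul_assoc,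
    coeff_C_mul]
  rw [show n + 1 + (u + 1) - 1 = u + n + 1 by omega, show n + 1 + u - 1 = u + n by omega,
    show n + (u + 1) - 1 = u + n by omega, show n + 2 + u - 1 = u + n + 1 by omega]
  linear_combination (-1 : R) ^ (u + 1) * q ^ ((u + 1 + 1).choose 2) * hpascal
    - (-1 : R) ^ u * q ^ ((u + 1).choose 2) * habsorb + q ^ n * qbin q (u + n) u * hsign

variable (R) in
noncomputable def ballotSeries (k : ℕ) : R⟦X⟧ := (1 - X) * (1 + X) ^ k

lemma coeff_one_add_X_pow (k s : ℕ) : coeff s ((1 + X : R⟦X⟧) ^ k) = k.choose s := by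
  rw [← Polynomial.coeff_one_add_X_pow R k s, ← Polynomial.coeff_coe]
  push_cast
  rfl

lemma coeff_ballotSeries (k s : ℕ) :
    coeff s (ballotSeries R k) = k.choose s - intChoose k ((s : ℤ) - 1) := by
  rcases s with _ | s
  · simp [ballotSeries, sub_mul, intChoose]
  · simp [ballotSeries, sub_mul, coeff_one_add_X_pow, intChoose, coeff_succ_X_mul]

lemma coeff_ballotSeries_middle (m : ℕ) : coeff (m + 1) (ballotSeries R (2 * m + 1)) = 0 := by
  simp [coeff_ballotSeries, intChoose, Nat.choose_symm_half]

lemma coeff_mul_ballotSeries_succ (n k ℓ : ℕ) :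
    coeff (ℓ + 1) (signedQbinSeries q (n + 1) * ballotSeries R (k + 1)) =
      coeff (ℓ + 1) (signedQbinSeries q n * ballotSeries R k) +
        (1 - q ^ (n + 1)) * coeff ℓ (signedQbinSeries q (n + 2) * ballotSeries R k) := by
  have h : signedQbinSeries q (n + 1) * ballotSeries R (k + 1) =
      (1 + X) * signedQbinSeries q (n + 1) * ballotSeries R k := by
    rw [ballotSeries, ballotSeries]; ring
  rw [h, one_add_X_mul_signedQbinSeries, add_mul, map_add, mul_assoc, mul_assoc, coeff_C_mul,
    coeff_succ_X_mul]

end Series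

section Mlk

open PowerSeries

lemma Mlk_eq_coeff (ℓ k : ℕ) :
    Mlk ℓ k =
      yv ^ ℓ * coeff ℓ (signedQbinSeries qv (k - 2 * ℓ + 1) * ballotSeries QY k) := by
  rw [Mlk, coeff_mul, Finset.Nat.sum_antidiagonal_eq_sum_range_succ_mk]
  refine congrArg (yv ^ ℓ * ·) (Finset.sum_congr rfl fun u hu => ?_)
  have hu : u ≤ ℓ := Finset.mem_range_succ_iff.mp hu
  rw [signedQbinSeries, coeff_mk, coeff_ballotSeries,
    show k - 2 * ℓ + 1 + u - 1 = k - 2 * ℓ + u by omega,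
    show ((ℓ - u : ℕ) : ℤ) - 1 = ℓ - u - 1 by omega]

lemma Mlk_zero_left (k : ℕ) : Mlk 0 k = 1 := by
  simp [Mlk, intChoose]

/-- At `n = 0` the value `Mlk (L + 1) (2 * L + 1)` is junk (the subtraction `k - 2ℓ` in `Mlk`
truncates), and the recurrence needs `0` there. -/
lemma Mlk_succ (L n : ℕ) :
    Mlk (L + 1) (n + 2 * L + 2) =
      (if n = 0 then 0 else Mlk (L + 1) (n + 2 * L + 1)) +
        yv * (1 - qv ^ (n + 1)) * Mlk L (n + 2 * L + 1) := by
  have hfirst : yv ^ (L + 1) * coeff (L + 1)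
      (signedQbinSeries qv n * ballotSeries QY (n + 2 * L + 1)) =
        if n = 0 then 0 else Mlk (L + 1) (n + 2 * L + 1) := by
    split_ifs with hn
    · subst hn
      rw [signedQbinSeries_zero, one_mul, zero_add, coeff_ballotSeries_middle, mul_zero]
    · rw [Mlk_eq_coeff, show n + 2 * L + 1 - 2 * (L + 1) + 1 = n by omega]
  rw [← hfirst, Mlk_eq_coeff, Mlk_eq_coeff L,
    show n + 2 * L + 2 - 2 * (L + 1) + 1 = n + 1 by omega,
    show n + 2 * L + 1 - 2 * L + 1 = n + 2 by omega,
    show n + 2 * L + 2 = n + 2 * L + 1 + 1 by omega,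
    coeff_mul_ballotSeries_succ]
  ring

end Mlk

noncomputable def dFormula (k i j : ℕ) : QY :=
  if i + j ≤ k ∧ (k - i - j) % 2 = 0 then qbin qv (i + j) i * Mlk ((k - i - j) / 2) k else 0

lemma dFormula_of_eq {k i j ℓ : ℕ} (h : k = i + j + 2 * ℓ) :
    dFormula k i j = qbin qv (i + j) i * Mlk ℓ k := by
  rw [dFormula, if_pos (by omega), show (k - i - j) / 2 = ℓ by omega]

lemma dFormula_eq_zero {k i j : ℕ} (h : ∀ ℓ, k ≠ i + j + 2 * ℓ) : dFormula k i j = 0 :=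
  if_neg fun ⟨_, _⟩ => h ((k - i - j) / 2) (by omega)

noncomputable def dRecurrence (f : ℕ → ℕ → QY) (i j : ℕ) : QY :=
  (if j = 0 then 0 else f i (j - 1)) + (if i = 0 then 0 else qv ^ j * f (i - 1) j) +
    yv * (1 - qv ^ (j + 1)) * f i (j + 1)

lemma dCoeff_succ (k : ℕ) : dCoeff (k + 1) = dRecurrence (dCoeff k) := rfl

lemma dRecurrence_dFormula_of_forall_ne {k i j : ℕ} (h : ∀ ℓ, k + 1 ≠ i + j + 2 * ℓ) :
    dRecurrence (dFormula k) i j = 0 := by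
  have hright : (if j = 0 then 0 else dFormula k i (j - 1)) = 0 := by
    split_ifs
    exacts [rfl, dFormula_eq_zero fun ℓ => by have := h ℓ; omega]
  have hleft : (if i = 0 then 0 else qv ^ j * dFormula k (i - 1) j) = 0 := by
    split_ifs
    exacts [rfl, by rw [dFormula_eq_zero fun ℓ => by have := h ℓ; omega, mul_zero]]
  rw [dRecurrence, hright, hleft, dFormula_eq_zero fun ℓ => by have := h (ℓ + 1); omega]
  ring

lemma dRecurrence_dFormula_of_eq {k i j ℓ : ℕ} (h : k + 1 = i + j + 2 * ℓ) :
    dRecurrence (dFormula k) i j =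
      ((if j = 0 then 0 else qbin qv (i + j - 1) i) +
        (if i = 0 then 0 else qv ^ j * qbin qv (i + j - 1) (i - 1))) * Mlk ℓ k +
      yv * (1 - qv ^ (j + 1)) * dFormula k i (j + 1) := by
  rw [dRecurrence, add_mul]
  congr 2 <;> split_ifs
  · simp
  · rw [dFormula_of_eq (ℓ := ℓ) (by omega), show i + (j - 1) = i + j - 1 by omega]
  · simp
  · rw [dFormula_of_eq (ℓ := ℓ) (by omega), show i - 1 + j = i + j - 1 by omega, mul_assoc]

lemma dFormula_succ (k : ℕ) : dFormula (k + 1) = dRecurrence (dFormula k) := by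
  funext i j
  by_cases h : ∃ ℓ, k + 1 = i + j + 2 * ℓ
  swap
  · simp only [not_exists] at h
    rw [dFormula_eq_zero h, dRecurrence_dFormula_of_forall_ne h]
  obtain ⟨ℓ, hℓ⟩ := h
  rw [dRecurrence_dFormula_of_eq hℓ, dFormula_of_eq hℓ]
  rcases ℓ with _ | L
  · rw [qbin_pascal_of_pos qv (by omega), dFormula_eq_zero fun ℓ => by omega, Mlk_zero_left,
      Mlk_zero_left]
    ring
  obtain rfl : k = i + j + 2 * L + 1 := by omega
  rw [dFormula_of_eq (show _ = i + (j + 1) + 2 * L by omega), Mlk_succ L (i + j)]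
  rcases Nat.eq_zero_or_pos (i + j) with hij | hij
  · obtain ⟨rfl, rfl⟩ : i = 0 ∧ j = 0 := by omega
    simp
  rw [qbin_pascal_of_pos qv hij, if_neg hij.ne']
  linear_combination -yv * Mlk L (i + j + 2 * L + 1) * one_sub_pow_mul_qbin_succ_left qv i j

lemma dFormula_zero : dFormula 0 = dCoeff 0 := by
  funext i j
  by_cases h : i = 0 ∧ j = 0
  · obtain ⟨rfl, rfl⟩ := h
    simp [dFormula, dCoeff, Mlk_zero_left]
  · rw [dCoeff, dFormula, if_neg h, if_neg (by omega)]

lemma dCoeff_eq_dFormula (k : ℕ) : dCoeff k = dFormula k := by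
  induction k with
  | zero => exact dFormula_zero.symm
  | succ k ih => rw [dCoeff_succ, ih, dFormula_succ]

theorem stmt16 (k i j : ℕ) :
    dCoeff k i j =
      if i + j ≤ k ∧ (k - i - j) % 2 = 0 then
        qbin qv (i + j) i * Mlk ((k - i - j) / 2) k
      else 0 :=
  congrFun₂ (dCoeff_eq_dFormula k) i j
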